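/- arXiv:2504.15744 — 4 statements merged into one kernel-verified Lean document; each statement's English description precedes it below -/
import Mathlib

section
/- Fix a sequence of pairs {(N_k, B_k)}_{k≥1} with integers N_k ≥ 2 and finite sets B_k ⊆ [0,∞), a sequence of positive integers n = {n_k}, and ω ∈ ℕ^ℕ. If the infinite convolution μ(ω) = δ_{N_{ω₁}^{-1}B_{ω₁}} * δ_{(N_{ω₁}N_{ω₂})^{-1}B_{ω₂}} * ⋯ exists (i.e., the partial convolutions converge weakly), then for every sequence n of positive integers the infinite convolution μⁿ(ω) = δ_{N_{ω₁}^{-n₁}B_{ω₁}} * δ_{N_{ω₁}^{-n₁}N_{ω₂}^{-n₂}B_{ω₂}} * ⋯ also exists. -/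
open MeasureTheory Filter Topology

/-- The convolution of two Borel measures on `ℝ`. -/
noncomputable def convM (μ ν : Measure ℝ) : Measure ℝ :=
  (μ.prod ν).map fun p => p.1 + p.2

/-- The uniformly distributed discrete measure `δ_A = (1/#A) ∑_{a ∈ A} δ_a`. -/
noncomputable def uniformM (A : Finset ℝ) : Measure ℝ :=
  ((A.card : ENNReal))⁻¹ • ∑ a ∈ A, Measure.dirac a

/-- The partial convolutions `ν_n = δ_{A_0} * δ_{A_1} * ⋯ * δ_{A_n}`. -/
noncomputable def partialConv (A : ℕ → Finset ℝ) : ℕ → Measure ℝ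
  | 0 => uniformM (A 0)
  | n + 1 => convM (partialConv A n) (uniformM (A (n + 1)))

/-- Weak convergence of a sequence of Borel measures on `ℝ`. -/
def WTendsto (μs : ℕ → Measure ℝ) (μ : Measure ℝ) : Prop :=
  ∀ f : BoundedContinuousFunction ℝ ℝ,
    Tendsto (fun k => ∫ x, f x ∂(μs k)) atTop (𝓝 (∫ x, f x ∂μ))


/-!
All partial convolutions live on one probability space: under the product `P` of the uniform
measures on the `A k`, the coordinates `x k` are independent, so `δ_{A₀ / c₀} * ⋯ * δ_{Aₘ / cₘ}`
is the law of `Sₘ x = ∑_{k ≤ m} x k / c k`. As the atoms are nonnegative, `Sₘ` increases with `m`,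
and weak convergence of its laws forbids escape to infinity, so `sup Sₘ < ∞` almost surely.
Dividing by larger constants `c' k ≥ c k` (the products of the `N_{ω i} ^ n i` instead of those of
the `N_{ω i}`) gives `S'ₘ ≤ Sₘ`, so `S'ₘ` converges almost surely too, hence in distribution.
-/

open Set ProbabilityTheory

lemma isProbabilityMeasure_uniformM {A : Finset ℝ} (hA : A.Nonempty) :
    IsProbabilityMeasure (uniformM A) := by
  constructor
  simp [uniformM, ENNReal.inv_mul_cancel, hA.ne_empty]

lemma map_uniformM {A : Finset ℝ} {g : ℝ → ℝ} (hg : Measurable g) (hinj : InjOn g A) :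
    (uniformM A).map g = uniformM (A.image g) := by
  simp [uniformM, Measure.map_smul, Measure.map_finset_sum hg.aemeasurable,
    Measure.map_dirac' hg, Finset.card_image_of_injOn hinj, Finset.sum_image hinj]

lemma ae_mem_uniformM (A : Finset ℝ) : ∀ᵐ a ∂uniformM A, a ∈ A := by
  rw [ae_iff, uniformM, Measure.smul_apply, Measure.finsetSum_apply]
  simp

section InfinitePi

variable (A : ℕ → Finset ℝ) [∀ k, IsProbabilityMeasure (uniformM (A k))]

lemma partialConv_eq_map_infinitePi (m : ℕ) :
    partialConv A m = (Measure.infinitePi fun k => uniformM (A k)).map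
      fun x => ∑ k ∈ Finset.range (m + 1), x k := by
  induction m with
  | zero => simp [partialConv, Measure.infinitePi_map_eval]
  | succ m ih =>
    have hindep : IndepFun (fun x : ℕ → ℝ => ∑ k ∈ Finset.range (m + 1), x k)
        (fun x => x (m + 1)) (Measure.infinitePi fun k => uniformM (A k)) := by
      have hcoord := iIndepFun_infinitePi (P := fun k => uniformM (A k)) (X := fun _ => id)
        fun _ => measurable_id
      simpa [Finset.sum_fn] using hcoord.indepFun_finsetSum_of_notMem (fun k => by fun_prop)
        (s := Finset.range (m + 1)) (i := m + 1) (by simp)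
    rw [partialConv, ih, convM, ← Measure.infinitePi_map_eval (fun k => uniformM (A k)) (m + 1),
      ← hindep.map_prod_eq_prod_map_map (by fun_prop) (measurable_pi_apply _).aemeasurable,
      Measure.map_map (by fun_prop) (by fun_prop)]
    congr 1
    funext x
    simp [Finset.sum_range_succ _ (m + 1)]

lemma partialConv_image_eq_map_infinitePi {g : ℕ → ℝ → ℝ} (hg : ∀ k, Measurable (g k))
    (hinj : ∀ k, InjOn (g k) (A k)) (m : ℕ) :
    partialConv (fun k => (A k).image (g k)) m = (Measure.infinitePi fun k => uniformM (A k)).map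
      fun x => ∑ k ∈ Finset.range (m + 1), g k (x k) := by
  have (k : ℕ) : IsProbabilityMeasure (uniformM ((A k).image (g k))) :=
    map_uniformM (hg k) (hinj k) ▸ Measure.isProbabilityMeasure_map (hg k).aemeasurable
  rw [partialConv_eq_map_infinitePi, ← funext fun k => map_uniformM (hg k) (hinj k),
    ← Measure.infinitePi_map_pi (fun k => uniformM (A k)) hg,
    Measure.map_map (by fun_prop) (by fun_prop)]
  rfl

lemma ae_mem_infinitePi_uniformM :
    ∀ᵐ x ∂(Measure.infinitePi fun k => uniformM (A k)), ∀ k, x k ∈ A k :=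
  ae_all_iff.2 fun k => ae_of_ae_map (measurable_pi_apply k).aemeasurable <| by
    rw [Measure.infinitePi_map_eval]
    exact ae_mem_uniformM (A k)

end InfinitePi

lemma wtendsto_iff_tendsto {μs : ℕ → ProbabilityMeasure ℝ} {μ : ProbabilityMeasure ℝ} :
    WTendsto (fun m => (μs m : Measure ℝ)) μ ↔ Tendsto μs atTop (𝓝 μ) :=
  ProbabilityMeasure.tendsto_iff_forall_integral_tendsto.symm

section Monotone

variable {Ω : Type*} [MeasurableSpace Ω] {P : Measure Ω} [IsProbabilityMeasure P]
  {X : ℕ → Ω → ℝ}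

lemma exists_wtendsto_map_of_monotone (hX : ∀ m, Measurable (X m))
    (hmono : ∀ᵐ ω ∂P, Monotone fun m => X m ω)
    (hbdd : ∀ᵐ ω ∂P, BddAbove (range fun m => X m ω)) :
    ∃ μ : Measure ℝ, IsProbabilityMeasure μ ∧ WTendsto (fun m => P.map (X m)) μ := by
  have hsup : Measurable fun ω => ⨆ m, X m ω := Measurable.iSup hX
  have hconv := tendstoInDistribution_of_ae_tendsto (l := atTop) (fun m => (hX m).aemeasurable)
    hsup.aemeasurable <| by
      filter_upwards [hmono, hbdd] with ω hω hω' using tendsto_atTop_ciSup hω hω'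
  exact ⟨_, Measure.isProbabilityMeasure_map hsup.aemeasurable,
    wtendsto_iff_tendsto.2 hconv.tendsto⟩

lemma ae_bddAbove_of_wtendsto_map (hX : ∀ m, Measurable (X m))
    (hmono : ∀ᵐ ω ∂P, Monotone fun m => X m ω) {μ : Measure ℝ} [IsProbabilityMeasure μ]
    (hμ : WTendsto (fun m => P.map (X m)) μ) :
    ∀ᵐ ω ∂P, BddAbove (range fun m => X m ω) := by
  let ν : ℕ → ProbabilityMeasure ℝ := fun m =>
    ⟨P.map (X m), Measure.isProbabilityMeasure_map (hX m).aemeasurable⟩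
  have hν : Tendsto ν atTop (𝓝 ⟨μ, ‹_›⟩) := wtendsto_iff_tendsto.1 hμ
  let E : ℝ → ℕ → Set Ω := fun x m => {ω | ∀ j ≤ m, X j ω ≤ x}
  have hE : ∀ x, μ (Iio x) ≤ P (⋂ m, E x m) := by
    intro x
    have hanti : Antitone (E x) := fun m m' h ω hω j hj => hω j (hj.trans h)
    have hmeas : ∀ m, MeasurableSet (E x m) := fun m => by
      simp only [E, ofPred_forall]
      exact .iInter fun j => .iInter fun _ => measurableSet_le (hX j) measurable_const
    have hlim := tendsto_measure_iInter_atTop (fun m => (hmeas m).nullMeasurableSet) hanti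
      ⟨0, measure_ne_top P _⟩
    calc μ (Iio x) ≤ atTop.liminf fun m => (ν m : Measure ℝ) (Iio x) :=
          ProbabilityMeasure.le_liminf_measure_open_of_tendsto hν isOpen_Iio
      _ ≤ atTop.liminf fun m => P (E x m) := by
          refine liminf_le_liminf (Eventually.of_forall fun m => ?_)
          show P.map (X m) (Iio x) ≤ _
          rw [Measure.map_apply (hX m) measurableSet_Iio]
          refine measure_mono_ae ?_
          filter_upwards [hmono] with ω hω hlt j hj
          exact (hω hj).trans (le_of_lt hlt)
      _ = P (⋂ m, E x m) := hlim.liminf_eq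
  have hEbdd : ∀ x, (⋂ m, E x m) ⊆ {ω | BddAbove (range fun m => X m ω)} := fun x ω hω =>
    ⟨x, forall_mem_range.2 fun m => mem_iInter.1 hω m m le_rfl⟩
  have hμIio : Tendsto (fun x => μ (Iio x)) atTop (𝓝 1) := by
    simpa [Function.comp_def] using tendsto_measure_iUnion_atTop (μ := μ) monotone_Iio
  refine (ae_iff_measure_eq (measurableSet_bddAbove_range hX).nullMeasurableSet).2
    (le_antisymm (measure_mono (subset_univ _)) ?_)
  rw [measure_univ]
  exact le_of_tendsto' hμIio fun x => (hE x).trans (measure_mono (hEbdd x))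

end Monotone

theorem exists_wtendsto_partialConv_image_div_of_le (A : ℕ → Finset ℝ)
    (hA : ∀ k, (A k).Nonempty) (hA_nonneg : ∀ k, ∀ a ∈ A k, 0 ≤ a) {c c' : ℕ → ℝ}
    (hc : ∀ k, 0 < c k) (hcc' : ∀ k, c k ≤ c' k)
    (h : ∃ μ : Measure ℝ, IsProbabilityMeasure μ ∧
      WTendsto (partialConv fun k => (A k).image (· / c k)) μ) :
    ∃ μ : Measure ℝ, IsProbabilityMeasure μ ∧
      WTendsto (partialConv fun k => (A k).image (· / c' k)) μ := by
  obtain ⟨μ, hμ, hconv⟩ := h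
  have (k : ℕ) : IsProbabilityMeasure (uniformM (A k)) := isProbabilityMeasure_uniformM (hA k)
  set P := Measure.infinitePi fun k => uniformM (A k)
  set S : (ℕ → ℝ) → ℕ → (ℕ → ℝ) → ℝ := fun c m x => ∑ k ∈ Finset.range (m + 1), x k / c k
  have hS (c : ℕ → ℝ) (m : ℕ) : Measurable (S c m) := by fun_prop
  have hlaw (c : ℕ → ℝ) (hc : ∀ k, 0 < c k) :
      partialConv (fun k => (A k).image (· / c k)) = fun m => P.map (S c m) :=
    funext <| partialConv_image_eq_map_infinitePi A (fun k => measurable_id.div_const _)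
      fun k _ _ _ _ hab => (div_left_inj' (hc k).ne').1 hab
  have hmono (c : ℕ → ℝ) (hc : ∀ k, 0 < c k) : ∀ᵐ x ∂P, Monotone fun m => S c m x := by
    filter_upwards [ae_mem_infinitePi_uniformM A] with x hx
    refine monotone_nat_of_le_succ fun m => ?_
    simpa [S, Finset.sum_range_succ _ (m + 1)] using div_nonneg (hA_nonneg _ _ (hx _)) (hc _).le
  have hle : ∀ᵐ x ∂P, ∀ m, S c' m x ≤ S c m x := by
    filter_upwards [ae_mem_infinitePi_uniformM A] with x hx m
    exact Finset.sum_le_sum fun k _ =>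
      div_le_div_of_nonneg_left (hA_nonneg _ _ (hx k)) (hc k) (hcc' k)
  have hc' : ∀ k, 0 < c' k := fun k => (hc k).trans_le (hcc' k)
  rw [hlaw c hc] at hconv
  rw [hlaw c' hc']
  refine exists_wtendsto_map_of_monotone (hS c') (hmono c' hc') ?_
  filter_upwards [ae_bddAbove_of_wtendsto_map (hS c) (hmono c hc) hconv, hle] with x ⟨b, hb⟩ hle
  exact ⟨b, forall_mem_range.2 fun m => (hle m).trans (hb (mem_range_self m))⟩

theorem stmt9 (N : ℕ → ℕ) (hN : ∀ k, 2 ≤ N k) (B : ℕ → Finset ℝ)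
    (hBne : ∀ k, (B k).Nonempty) (hBpos : ∀ k, ∀ b ∈ B k, 0 ≤ b)
    (ω : ℕ → ℕ) (n : ℕ → ℕ) (hn : ∀ k, 1 ≤ n k)
    (hex : ∃ μ : Measure ℝ, IsProbabilityMeasure μ ∧
      WTendsto (partialConv fun k =>
        (B (ω k)).image fun x => x / ∏ i ∈ Finset.range (k + 1), (N (ω i) : ℝ)) μ) :
    ∃ μ : Measure ℝ, IsProbabilityMeasure μ ∧
      WTendsto (partialConv fun k =>
        (B (ω k)).image fun x => x / ∏ i ∈ Finset.range (k + 1), (N (ω i) : ℝ) ^ (n i)) μ := by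
  have hN_one (i : ℕ) : (1 : ℝ) ≤ N i := by exact_mod_cast one_le_two.trans (hN i)
  refine exists_wtendsto_partialConv_image_div_of_le (fun k => B (ω k)) (fun k => hBne _)
    (fun k => hBpos _) (fun k => ?_) (fun k => ?_) hex
  · exact Finset.prod_pos fun i _ => zero_lt_one.trans_le (hN_one _)
  · exact Finset.prod_le_prod (fun i _ => by positivity)
      fun i _ => le_self_pow₀ (hN_one _) (by have := hn i; omega)
end

section
/- Let {(N_k, B_k)}_{k≥1} with N_k ≥ 2 integers and B_k ⊆ [0,∞) finite. Suppose the family Φ = {μ(ω) : ω ∈ ℕ^ℕ} of infinite convolutions μ(ω) = δ_{N_{ω₁}^{-1}B_{ω₁}} * δ_{(N_{ω₁}N_{ω₂})^{-1}B_{ω₂}} * ⋯ exists and is tight. Then for every sequence n of positive integers, the map φ : ℕ^ℕ → P(ℝ), φ(ω) = μⁿ(ω) = δ_{N_{ω₁}^{-n₁}B_{ω₁}} * δ_{N_{ω₁}^{-n₁}N_{ω₂}^{-n₂}B_{ω₂}} * ⋯, is continuous from the metric space (ℕ^ℕ, d) with d(u,v)=2^{-|u∧v|} to P(ℝ) with the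 weak topology. -/
open MeasureTheory Filter Topology

/-- Tightness of a family of Borel measures on `ℝ`. -/
def TightFam (S : Set (Measure ℝ)) : Prop :=
  ∀ ε : ENNReal, 0 < ε → ∃ K : Set ℝ, IsCompact K ∧ ∀ μ ∈ S, μ Kᶜ ≤ ε

namespace Stmt12Aux

noncomputable def avgF (A : ℕ → Finset ℝ) : ℕ → (ℝ → ℝ) → ℝ
  | 0, g => ((A 0).card : ℝ)⁻¹ * ∑ a ∈ A 0, g a
  | M + 1, g => ((A (M + 1)).card : ℝ)⁻¹ * ∑ a ∈ A (M + 1), avgF A M fun x => g (x + a)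

lemma avgF_congr {A A' : ℕ → Finset ℝ} : ∀ (M : ℕ), (∀ k, k ≤ M → A k = A' k) →
    ∀ g, avgF A M g = avgF A' M g
  | 0, h, g => by simp [avgF, h 0 (le_refl 0)]
  | M + 1, h, g => by
    simp only [avgF, h (M+1) le_rfl]
    congr 1
    exact Finset.sum_congr rfl fun a _ => avgF_congr M (fun k hk => h k (hk.trans (Nat.le_succ M))) _

lemma avgF_const {A : ℕ → Finset ℝ} (hne : ∀ k, (A k).Nonempty) :
    ∀ (M : ℕ) (c : ℝ), avgF A M (fun _ => c) = c := by
  intro M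
  induction M with
  | zero =>
    intro c
    have h0 : ((A 0).card : ℝ) ≠ 0 := by
      simpa using Finset.card_ne_zero_of_mem (hne 0).choose_spec
    simp [avgF, Finset.sum_const, nsmul_eq_mul]
    field_simp
  | succ M ih =>
    intro c
    have h0 : ((A (M+1)).card : ℝ) ≠ 0 := by
      simpa using Finset.card_ne_zero_of_mem (hne (M+1)).choose_spec
    simp only [avgF, ih]
    simp [Finset.sum_const, nsmul_eq_mul]
    field_simp

lemma avgF_add {A : ℕ → Finset ℝ} : ∀ (M : ℕ) (g h : ℝ → ℝ),
    avgF A M (fun x => g x + h x) = avgF A M g + avgF A M h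
  | 0, g, h => by simp [avgF, Finset.sum_add_distrib, mul_add]
  | M + 1, g, h => by
    simp only [avgF]
    rw [← mul_add, ← Finset.sum_add_distrib]
    congr 1
    exact Finset.sum_congr rfl fun a _ => avgF_add M _ _

lemma avgF_mul_const {A : ℕ → Finset ℝ} : ∀ (M : ℕ) (c : ℝ) (g : ℝ → ℝ),
    avgF A M (fun x => c * g x) = c * avgF A M g
  | 0, c, g => by
    simp only [avgF, ← Finset.mul_sum]
    ring
  | M + 1, c, g => by
    simp only [avgF]
    rw [Finset.sum_congr rfl fun a _ => avgF_mul_const M c _, ← Finset.mul_sum]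
    ring

lemma avgF_sub {A : ℕ → Finset ℝ} (M : ℕ) (g h : ℝ → ℝ) :
    avgF A M (fun x => g x - h x) = avgF A M g - avgF A M h := by
  have := avgF_add (A := A) M g (fun x => -1 * h x)
  rw [avgF_mul_const] at this
  simpa [sub_eq_add_neg] using this

lemma avgF_mono {A : ℕ → Finset ℝ} (hpos : ∀ k, ∀ a ∈ A k, 0 ≤ a) :
    ∀ (M : ℕ) (g h : ℝ → ℝ), (∀ x, 0 ≤ x → g x ≤ h x) → avgF A M g ≤ avgF A M h
  | 0, g, h, hgh => by
    simp only [avgF]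
    apply mul_le_mul_of_nonneg_left _ (by positivity)
    exact Finset.sum_le_sum fun a ha => hgh a (hpos 0 a ha)
  | M + 1, g, h, hgh => by
    simp only [avgF]
    apply mul_le_mul_of_nonneg_left _ (by positivity)
    refine Finset.sum_le_sum fun a ha => avgF_mono hpos M _ _ fun x hx => ?_
    exact hgh (x + a) (by have := hpos (M+1) a ha; linarith)

lemma avgF_abs {A : ℕ → Finset ℝ} : ∀ (M : ℕ) (g : ℝ → ℝ),
    |avgF A M g| ≤ avgF A M (fun x => |g x|)
  | 0, g => by
    simp only [avgF, abs_mul]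
    rw [abs_inv, Nat.abs_cast]
    apply mul_le_mul_of_nonneg_left _ (by positivity)
    exact Finset.abs_sum_le_sum_abs _ _
  | M + 1, g => by
    simp only [avgF, abs_mul]
    rw [abs_inv, Nat.abs_cast]
    apply mul_le_mul_of_nonneg_left _ (by positivity)
    exact (Finset.abs_sum_le_sum_abs _ _).trans
      (Finset.sum_le_sum fun a _ => avgF_abs M _)

lemma avgF_le_succ {A : ℕ → Finset ℝ} (hne : ∀ k, (A k).Nonempty)
    (hpos : ∀ k, ∀ a ∈ A k, 0 ≤ a) {g : ℝ → ℝ} (hg : Monotone g) (M : ℕ) :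
    avgF A M g ≤ avgF A (M + 1) g := by
  have h0 : (0:ℝ) < ((A (M+1)).card : ℝ) := by
    have := Finset.card_pos.mpr (hne (M+1)); exact_mod_cast this
  have key : ∀ a ∈ A (M+1), avgF A M g ≤ avgF A M (fun x => g (x + a)) := by
    intro a ha
    exact avgF_mono hpos M _ _ fun x _ => hg (by have := hpos (M+1) a ha; linarith)
  calc avgF A M g = (((A (M+1)).card : ℝ))⁻¹ * ∑ _a ∈ A (M+1), avgF A M g := by
        rw [Finset.sum_const, nsmul_eq_mul]; field_simp
    _ ≤ (((A (M+1)).card : ℝ))⁻¹ * ∑ a ∈ A (M+1), avgF A M (fun x => g (x + a)) := by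
        apply mul_le_mul_of_nonneg_left (Finset.sum_le_sum key) (by positivity)
    _ = avgF A (M + 1) g := rfl

lemma avgF_image_cmp {B : ℕ → Finset ℝ} {φ ψ : ℕ → ℝ → ℝ} {lam : ℝ} (hlam : 0 ≤ lam)
    (hφ : ∀ k, Set.InjOn (φ k) (B k)) (hψ : ∀ k, Set.InjOn (ψ k) (B k))
    (h0 : ∀ k, ∀ b ∈ B k, 0 ≤ φ k b ∧ 0 ≤ ψ k b ∧ φ k b ≤ lam * ψ k b) :
    ∀ (M : ℕ) (g h : ℝ → ℝ), (∀ x y, 0 ≤ x → 0 ≤ y → x ≤ lam * y → g x ≤ h y) →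
    avgF (fun k => (B k).image (φ k)) M g ≤ avgF (fun k => (B k).image (ψ k)) M h
  | 0, g, h, hgh => by
    simp only [avgF, Finset.card_image_of_injOn (hφ 0), Finset.card_image_of_injOn (hψ 0),
      Finset.sum_image (fun a ha b hb => hφ 0 ha hb), Finset.sum_image (fun a ha b hb => hψ 0 ha hb)]
    apply mul_le_mul_of_nonneg_left _ (by positivity)
    refine Finset.sum_le_sum fun b hb => ?_
    obtain ⟨h1, h2, h3⟩ := h0 0 b hb
    exact hgh _ _ h1 h2 h3
  | M + 1, g, h, hgh => by
    simp only [avgF, Finset.card_image_of_injOn (hφ (M+1)), Finset.card_image_of_injOn (hψ (M+1)),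
      Finset.sum_image (fun a ha b hb => hφ (M+1) ha hb),
      Finset.sum_image (fun a ha b hb => hψ (M+1) ha hb)]
    apply mul_le_mul_of_nonneg_left _ (by positivity)
    refine Finset.sum_le_sum fun b hb => ?_
    obtain ⟨h1, h2, h3⟩ := h0 (M+1) b hb
    refine avgF_image_cmp hlam hφ hψ h0 M _ _ fun x y hx hy hxy => ?_
    refine hgh _ _ (by linarith) (by linarith) ?_
    rw [mul_add]
    exact add_le_add hxy h3

lemma avgF_split {A : ℕ → Finset ℝ} (m : ℕ) :
    ∀ (k : ℕ) (g : ℝ → ℝ), avgF A (m + k + 1) g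
      = avgF (fun j => A (m + 1 + j)) k (fun t => avgF A m (fun x => g (x + t)))
  | 0, g => by
    have e : m + 1 + 0 = m + 1 := rfl
    simp only [avgF, e]
  | k + 1, g => by
    have e : m + 1 + (k + 1) = m + (k + 1) + 1 := by omega
    show ((A (m + (k+1) + 1)).card : ℝ)⁻¹ * ∑ a ∈ A (m + (k+1) + 1), avgF A (m + k + 1) (fun x => g (x + a)) = _
    conv_rhs => rw [avgF]
    rw [e]
    congr 1
    refine Finset.sum_congr rfl fun a _ => ?_
    rw [avgF_split m k (fun x => g (x + a))]
    congr 1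
    funext t
    congr 1
    funext x
    rw [add_assoc]

lemma ae_eq_dirac' (f : ℝ → ℝ) (a : ℝ) : f =ᵐ[Measure.dirac a] (fun _ => f a) := by
  rw [Filter.EventuallyEq, ae_iff]
  refine measure_mono_null (fun x hx => ?_) (?_ : Measure.dirac a ({a}ᶜ) = 0)
  · simp only [Set.mem_setOf_eq] at hx
    simp only [Set.mem_compl_iff, Set.mem_singleton_iff]
    rintro rfl; exact hx rfl
  · rw [Measure.dirac_apply' a (MeasurableSet.singleton a).compl]
    simp

lemma integrable_dirac' (f : ℝ → ℝ) (a : ℝ) : Integrable f (Measure.dirac a) := by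
  constructor
  · exact ⟨fun _ => f a, stronglyMeasurable_const, ae_eq_dirac' f a⟩
  · rw [hasFiniteIntegral_congr (ae_eq_dirac' f a)]
    simp [HasFiniteIntegral, MeasureTheory.lintegral_dirac]

lemma integral_uniformM (A : Finset ℝ) (f : ℝ → ℝ) :
    ∫ x, f x ∂uniformM A = ((A.card : ℝ))⁻¹ * ∑ a ∈ A, f a := by
  rw [uniformM, integral_smul_measure,
    integral_finset_sum_measure (fun i _ => integrable_dirac' f i)]
  simp [integral_dirac, ENNReal.toReal_inv, smul_eq_mul]

lemma isProbabilityMeasure_uniformM {A : Finset ℝ} (h : A.Nonempty) :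
    IsProbabilityMeasure (uniformM A) := by
  constructor
  rw [uniformM, Measure.smul_apply, Measure.finset_sum_apply]
  simp only [measure_univ, Finset.sum_const, nsmul_eq_mul, mul_one, smul_eq_mul]
  rw [ENNReal.inv_mul_cancel]
  · exact_mod_cast Nat.cast_ne_zero.mpr (Finset.card_ne_zero_of_mem h.choose_spec)
  · exact ENNReal.natCast_ne_top _

lemma isProbabilityMeasure_convM (μ ν : Measure ℝ) [IsProbabilityMeasure μ]
    [IsProbabilityMeasure ν] : IsProbabilityMeasure (convM μ ν) :=
  Measure.isProbabilityMeasure_map (measurable_fst.add measurable_snd).aemeasurable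

lemma isProbabilityMeasure_partialConv {A : ℕ → Finset ℝ} (hne : ∀ k, (A k).Nonempty) :
    ∀ M, IsProbabilityMeasure (partialConv A M)
  | 0 => isProbabilityMeasure_uniformM (hne 0)
  | M + 1 => by
    have := isProbabilityMeasure_partialConv hne M
    have := isProbabilityMeasure_uniformM (hne (M+1))
    exact isProbabilityMeasure_convM _ _

lemma integral_partialConv {A : ℕ → Finset ℝ} (hne : ∀ k, (A k).Nonempty) :
    ∀ (M : ℕ) (g : BoundedContinuousFunction ℝ ℝ),
      ∫ x, g x ∂partialConv A M = avgF A M g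
  | 0, g => by rw [show partialConv A 0 = uniformM (A 0) from rfl, integral_uniformM]; rfl
  | M + 1, g => by
    have hP := isProbabilityMeasure_partialConv hne M
    have hU := isProbabilityMeasure_uniformM (hne (M+1))
    have hmeas : Measurable fun p : ℝ × ℝ => p.1 + p.2 := measurable_fst.add measurable_snd
    rw [show partialConv A (M+1) = convM (partialConv A M) (uniformM (A (M+1))) from rfl,
      convM, integral_map hmeas.aemeasurable g.continuous.aestronglyMeasurable]
    have hint : Integrable (fun p : ℝ × ℝ => g (p.1 + p.2))
        ((partialConv A M).prod (uniformM (A (M+1)))) := by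
      exact (g.compContinuous (⟨fun p : ℝ × ℝ => p.1 + p.2, by continuity⟩ : C(ℝ × ℝ, ℝ))).integrable _
    rw [MeasureTheory.integral_prod_symm _ hint, integral_uniformM]
    show _ = ((A (M+1)).card : ℝ)⁻¹ * ∑ a ∈ A (M+1), avgF A M fun x => g (x + a)
    congr 1
    refine Finset.sum_congr rfl fun a _ => ?_
    exact integral_partialConv hne M
      (g.compContinuous (⟨fun x : ℝ => x + a, by continuity⟩ : C(ℝ, ℝ)))

def WTendsto' (μs : ℕ → MeasureTheory.Measure ℝ) (μ : MeasureTheory.Measure ℝ) : Prop :=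
  ∀ f : BoundedContinuousFunction ℝ ℝ,
    Tendsto (fun k => ∫ x, f x ∂(μs k)) atTop (𝓝 (∫ x, f x ∂μ))

noncomputable def gtest (c d : ℝ) : BoundedContinuousFunction ℝ ℝ :=
  BoundedContinuousFunction.mkOfBound
    ⟨fun x => min 1 (max 0 ((x - c) / d)),
      continuous_const.min ((continuous_const.max (by continuity)))⟩ 1 (by
      intro x y
      simp only [ContinuousMap.coe_mk]
      rw [Real.dist_eq, abs_sub_le_iff]
      constructor <;> nlinarith [min_le_left (1:ℝ) (max 0 ((x-c)/d)),
        le_min (zero_le_one) (le_max_left (0:ℝ) ((x-c)/d)),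
        min_le_left (1:ℝ) (max 0 ((y-c)/d)),
        le_min (zero_le_one) (le_max_left (0:ℝ) ((y-c)/d))])

lemma gtest_apply (c d x : ℝ) : gtest c d x = min 1 (max 0 ((x - c) / d)) := rfl

lemma gtest_nonneg (c d x : ℝ) : 0 ≤ gtest c d x := by
  rw [gtest_apply]; exact le_min zero_le_one (le_max_left _ _)

lemma gtest_le_one (c d x : ℝ) : gtest c d x ≤ 1 := by
  rw [gtest_apply]; exact min_le_left _ _

lemma gtest_mono {c d : ℝ} (hd : 0 < d) : Monotone fun x => gtest c d x := by
  intro x y hxy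
  show gtest c d x ≤ gtest c d y
  rw [gtest_apply, gtest_apply]
  exact min_le_min le_rfl (max_le_max le_rfl (by gcongr))

lemma gtest_eq_zero {c d x : ℝ} (hd : 0 < d) (hx : x ≤ c) : gtest c d x = 0 := by
  rw [gtest_apply]
  have : (x - c) / d ≤ 0 := div_nonpos_of_nonpos_of_nonneg (by linarith) hd.le
  rw [max_eq_left this, min_eq_right zero_le_one]

lemma gtest_eq_one {c d x : ℝ} (hd : 0 < d) (hx : c + d ≤ x) : gtest c d x = 1 := by
  rw [gtest_apply]
  have h1 : (1:ℝ) ≤ (x - c) / d := (one_le_div hd).mpr (by linarith)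
  rw [max_eq_right (by linarith), min_eq_left h1]

lemma gtest_pos_imp {c d x : ℝ} (hd : 0 < d) (h : 0 < gtest c d x) : c < x := by
  by_contra hc
  rw [gtest_eq_zero hd (not_lt.mp hc)] at h
  exact lt_irrefl 0 h

lemma head_tight {A : ℕ → Finset ℝ} (hne : ∀ k, (A k).Nonempty)
    (hpos : ∀ k, ∀ a ∈ A k, 0 ≤ a) {ν : Measure ℝ}
    (hW : WTendsto' (partialConv A) ν) {C ε' : ℝ} (hε' : 0 ≤ ε')
    (hν : ν {x | C < x} ≤ ENNReal.ofReal ε') (M : ℕ) :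
    avgF A M (gtest C 1) ≤ ε' := by
  have hmono : Monotone fun M => avgF A M (gtest C 1) :=
    monotone_nat_of_le_succ fun M => avgF_le_succ hne hpos (gtest_mono one_pos) M
  have hlim : Tendsto (fun M => avgF A M (gtest C 1)) atTop (𝓝 (∫ x, gtest C 1 x ∂ν)) := by
    have := hW (gtest C 1)
    simpa only [integral_partialConv hne] using this
  have h1 : avgF A M (gtest C 1) ≤ ∫ x, gtest C 1 x ∂ν := hmono.ge_of_tendsto hlim M
  have h2 : ENNReal.ofReal (∫ x, gtest C 1 x ∂ν) ≤ ν {x | C < x} := by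
    apply integral_le_measure
    · intro x _; exact gtest_le_one C 1 x
    · intro x hx
      simp only [Set.mem_compl_iff, Set.mem_setOf_eq, not_lt] at hx
      exact le_of_eq (gtest_eq_zero one_pos hx)
  have h4 : ∫ x, gtest C 1 x ∂ν ≤ ε' :=
    (ENNReal.ofReal_le_ofReal_iff hε').mp (h2.trans hν)
  linarith

end Stmt12Aux

open Stmt12Aux

set_option maxHeartbeats 1000000 in
theorem stmt12 (N : ℕ → ℕ) (hN : ∀ k, 2 ≤ N k) (B : ℕ → Finset ℝ)
    (hBne : ∀ k, (B k).Nonempty) (hBpos : ∀ k, ∀ b ∈ B k, 0 ≤ b)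
    (μ : (ℕ → ℕ) → Measure ℝ)
    (hμ : ∀ ω : ℕ → ℕ, IsProbabilityMeasure (μ ω) ∧
      WTendsto (partialConv fun k =>
        (B (ω k)).image fun x => x / ∏ i ∈ Finset.range (k + 1), (N (ω i) : ℝ)) (μ ω))
    (htight : TightFam (Set.range μ))
    (n : ℕ → ℕ) (hn : ∀ k, 1 ≤ n k)
    (μn : (ℕ → ℕ) → Measure ℝ)
    (hμn : ∀ ω : ℕ → ℕ, IsProbabilityMeasure (μn ω) ∧
      WTendsto (partialConv fun k =>
        (B (ω k)).image fun x => x / ∏ i ∈ Finset.range (k + 1), (N (ω i) : ℝ) ^ (n i)) (μn ω)) :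
    ∀ f : BoundedContinuousFunction ℝ ℝ,
      Continuous fun ω : ℕ → ℕ => ∫ x, f x ∂(μn ω) := by
  intro f
  have hMf0 : 0 ≤ ‖f‖ := norm_nonneg f
  set Mf : ℝ := ‖f‖ with hMfdef
  have hfb : ∀ x : ℝ, |f x| ≤ Mf := fun x => f.norm_coe_le_norm x
  -- basic positivity facts
  have hNR : ∀ i, (2:ℝ) ≤ (N i : ℝ) := fun i => by exact_mod_cast hN i
  have hPn : ∀ (ω : ℕ → ℕ) (k : ℕ),
      (0:ℝ) < ∏ i ∈ Finset.range (k + 1), (N (ω i) : ℝ) ^ (n i) :=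
    fun ω k => Finset.prod_pos fun i _ => pow_pos (by linarith [hNR (ω i)]) _
  have hP1 : ∀ (ω : ℕ → ℕ) (k : ℕ),
      (0:ℝ) < ∏ i ∈ Finset.range (k + 1), (N (ω i) : ℝ) :=
    fun ω k => Finset.prod_pos fun i _ => by linarith [hNR (ω i)]
  have hinj : ∀ (P : ℝ), P ≠ 0 → ∀ s : Set ℝ, Set.InjOn (fun x => x / P) s := by
    intro P hP s a _ b _ h
    simpa [div_eq_iff hP, hP] using h
  have hAnne : ∀ (ω : ℕ → ℕ) (k : ℕ),
      (((B (ω k)).image fun x =>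
        x / ∏ i ∈ Finset.range (k + 1), (N (ω i) : ℝ) ^ (n i)) : Finset ℝ).Nonempty :=
    fun ω k => (hBne _).image _
  have hAnpos : ∀ (ω : ℕ → ℕ) (k : ℕ), ∀ a ∈ ((B (ω k)).image fun x =>
      x / ∏ i ∈ Finset.range (k + 1), (N (ω i) : ℝ) ^ (n i)), 0 ≤ a := by
    intro ω k a ha
    obtain ⟨b, hb, rfl⟩ := Finset.mem_image.mp ha
    exact div_nonneg (hBpos _ b hb) (hPn ω k).le
  rw [continuous_iff_continuousAt]
  intro ω₀
  apply Metric.tendsto_nhds.mpr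
  intro ε hε
  -- constants from tightness
  set ε' : ℝ := ε / (32 * (Mf + 1)) with hε'def
  have hε'pos : 0 < ε' := by positivity
  obtain ⟨K, hK, hKb⟩ := htight (ENNReal.ofReal ε') (ENNReal.ofReal_pos.mpr hε'pos)
  obtain ⟨C₀, hC₀⟩ := hK.isBounded.subset_closedBall 0
  set C : ℝ := max C₀ 0 with hCdef
  have hC0 : 0 ≤ C := le_max_right _ _
  have hμb : ∀ ω : ℕ → ℕ, μ ω {x | C < x} ≤ ENNReal.ofReal ε' := by
    intro ω
    refine le_trans (measure_mono ?_) (hKb (μ ω) ⟨ω, rfl⟩)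
    intro x hx hxK
    have h1 : x ∈ Metric.closedBall (0:ℝ) C :=
      (hC₀.trans (Metric.closedBall_subset_closedBall (le_max_left _ _))) hxK
    rw [Real.closedBall_eq_Icc] at h1
    have := h1.2
    simp only [Set.mem_setOf_eq] at hx
    linarith
  -- head tightness bound
  have hhead : ∀ (ω : ℕ → ℕ) (M : ℕ),
      avgF (fun k => (B (ω k)).image fun x =>
        x / ∏ i ∈ Finset.range (k + 1), (N (ω i) : ℝ)) M (gtest C 1) ≤ ε' := by
    intro ω M
    refine head_tight ?_ ?_ (hμ ω).2 hε'pos.le (hμb ω) M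
    · exact fun k => (hBne _).image _
    · intro k a ha
      obtain ⟨b, hb, rfl⟩ := Finset.mem_image.mp ha
      exact div_nonneg (hBpos _ b hb) (hP1 ω k).le
  -- head bound for the n-scaled family
  have hheadn : ∀ (ω : ℕ → ℕ) (M : ℕ),
      avgF (fun k => (B (ω k)).image fun x =>
        x / ∏ i ∈ Finset.range (k + 1), (N (ω i) : ℝ) ^ (n i)) M (gtest C 1) ≤ ε' := by
    intro ω M
    refine le_trans (avgF_image_cmp (B := fun k => B (ω k))
      (φ := fun k x => x / ∏ i ∈ Finset.range (k + 1), (N (ω i) : ℝ) ^ (n i))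
      (ψ := fun k x => x / ∏ i ∈ Finset.range (k + 1), (N (ω i) : ℝ))
      (lam := 1) zero_le_one
      (fun k => hinj _ (hPn ω k).ne' _) (fun k => hinj _ (hP1 ω k).ne' _)
      ?_ M _ _ ?_) (hhead ω M)
    · intro k b hb
      have hb0 := hBpos _ b hb
      refine ⟨div_nonneg hb0 (hPn ω k).le, div_nonneg hb0 (hP1 ω k).le, ?_⟩
      rw [one_mul]
      have hle : ∏ i ∈ Finset.range (k + 1), (N (ω i) : ℝ)
          ≤ ∏ i ∈ Finset.range (k + 1), (N (ω i) : ℝ) ^ (n i) := by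
        refine Finset.prod_le_prod (fun i _ => by linarith [hNR (ω i)]) ?_
        intro i _
        exact le_self_pow₀ (by linarith [hNR (ω i)]) (by have := hn i; omega)
      exact div_le_div_of_nonneg_left hb0 (hP1 ω k) hle
    · intro x y hx hy hxy
      rw [one_mul] at hxy
      exact gtest_mono one_pos hxy
  -- uniform continuity on a window
  obtain ⟨δ, hδpos, hδ⟩ := Metric.uniformContinuousOn_iff.mp
    ((isCompact_Icc (a := (0:ℝ)) (b := C + 3)).uniformContinuousOn_of_continuous
      f.continuous.continuousOn) (ε / 16) (by positivity)
  set δ0 : ℝ := min (δ / 2) 1 with hδ0def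
  have hδ0pos : 0 < δ0 := lt_min (by linarith) one_pos
  have hδ0le1 : δ0 ≤ 1 := min_le_right _ _
  have hδ0ltδ : δ0 < δ := lt_of_le_of_lt (min_le_left _ _) (by linarith)
  -- choose m
  obtain ⟨m, hm⟩ := pow_unbounded_of_one_lt (2 * (C + 1) / δ0) (one_lt_two (α := ℝ))
  have hm' : C + 1 ≤ 2 ^ (m + 1) * (δ0 / 2) := by
    have h1 : 2 * (C + 1) / δ0 * δ0 = 2 * (C + 1) := div_mul_cancel₀ _ hδ0pos.ne'
    have h2 : (0:ℝ) < 2 ^ m := by positivity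
    rw [pow_succ]
    nlinarith [hm, hδ0pos]
  -- tail bound
  have htail : ∀ (ω' : ℕ → ℕ) (k : ℕ),
      avgF (fun j => (B (ω' (m + 1 + j))).image fun x =>
          x / ∏ i ∈ Finset.range (m + 1 + j + 1), (N (ω' i) : ℝ) ^ (n i)) k
        (gtest (δ0 / 2) (δ0 / 2)) ≤ ε' := by
    intro ω' k
    have h2p : (0:ℝ) < 2 ^ (m + 1) := by positivity
    refine le_trans (avgF_image_cmp (B := fun j => B (ω' (m + 1 + j)))
      (φ := fun j x => x / ∏ i ∈ Finset.range (m + 1 + j + 1), (N (ω' i) : ℝ) ^ (n i))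
      (ψ := fun j x => x / ∏ i ∈ Finset.range (j + 1), (N (ω' (m + 1 + i)) : ℝ))
      (lam := ((2:ℝ) ^ (m + 1))⁻¹) (by positivity)
      (fun j => hinj _ (hPn ω' (m + 1 + j)).ne' _)
      (fun j => hinj _ (hP1 (fun i => ω' (m + 1 + i)) j).ne' _)
      ?_ k _ _ ?_) (hhead (fun j => ω' (m + 1 + j)) k)
    · intro j b hb
      have hb0 := hBpos _ b hb
      set Q : ℝ := ∏ i ∈ Finset.range (j + 1), (N (ω' (m + 1 + i)) : ℝ) with hQdef
      have hQpos : 0 < Q := hP1 (fun i => ω' (m + 1 + i)) j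
      refine ⟨div_nonneg hb0 (hPn ω' (m + 1 + j)).le, div_nonneg hb0 hQpos.le, ?_⟩
      have hsplit : ∏ i ∈ Finset.range (m + 1 + j + 1), (N (ω' i) : ℝ) ^ (n i)
          = (∏ i ∈ Finset.range (m + 1), (N (ω' i) : ℝ) ^ (n i))
            * ∏ i ∈ Finset.range (j + 1), (N (ω' (m + 1 + i)) : ℝ) ^ (n (m + 1 + i)) := by
        have e : m + 1 + j + 1 = m + 1 + (j + 1) := by omega
        rw [e, Finset.prod_range_add (fun i => (N (ω' i) : ℝ) ^ (n i)) (m + 1) (j + 1)]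
      have hfirst : (2:ℝ) ^ (m + 1) ≤ ∏ i ∈ Finset.range (m + 1), (N (ω' i) : ℝ) ^ (n i) := by
        calc (2:ℝ) ^ (m + 1) = ∏ _i ∈ Finset.range (m + 1), (2:ℝ) := by
              rw [Finset.prod_const, Finset.card_range]
          _ ≤ _ := by
              refine Finset.prod_le_prod (fun i _ => by norm_num) ?_
              intro i _
              exact le_trans (hNR (ω' i))
                (le_self_pow₀ (by linarith [hNR (ω' i)]) (by have := hn i; omega))
      have hsecond : Q ≤ ∏ i ∈ Finset.range (j + 1),
          (N (ω' (m + 1 + i)) : ℝ) ^ (n (m + 1 + i)) := by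
        rw [hQdef]
        refine Finset.prod_le_prod (fun i _ => by linarith [hNR (ω' (m + 1 + i))]) ?_
        intro i _
        exact le_self_pow₀ (by linarith [hNR (ω' (m + 1 + i))]) (by have := hn (m + 1 + i); omega)
      have hprod : 2 ^ (m + 1) * Q ≤ ∏ i ∈ Finset.range (m + 1 + j + 1), (N (ω' i) : ℝ) ^ (n i) := by
        rw [hsplit]
        exact mul_le_mul hfirst hsecond hQpos.le (by positivity)
      have heq : ((2:ℝ) ^ (m + 1))⁻¹ * (b / Q) = b / (2 ^ (m + 1) * Q) := by
        field_simp
      rw [heq]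
      exact div_le_div_of_nonneg_left hb0 (by positivity) hprod
    · intro x y hx hy hxy
      by_cases hxs : x ≤ δ0 / 2
      · rw [gtest_eq_zero (by positivity) hxs]
        exact gtest_nonneg _ _ _
      · push_neg at hxs
        have hy' : C + 1 ≤ y := by
          have h1 : δ0 / 2 < ((2:ℝ) ^ (m + 1))⁻¹ * y := lt_of_lt_of_le hxs hxy
          have h2 : 2 ^ (m + 1) * (δ0 / 2) < y := by
            have := (mul_lt_mul_iff_right₀ h2p).mpr h1
            rwa [← mul_assoc, mul_inv_cancel₀ h2p.ne', one_mul] at this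
          linarith
        rw [gtest_eq_one one_pos hy']
        exact gtest_le_one _ _ _
  -- the head average (depends only on ω₀'s first m+1 coordinates)
  set avm : ℝ := avgF (fun k => (B (ω₀ k)).image fun x =>
      x / ∏ i ∈ Finset.range (k + 1), (N (ω₀ i) : ℝ) ^ (n i)) m (⇑f) with havmdef
  -- central claim
  have hclaim : ∀ ω' : ℕ → ℕ, (∀ i, i ≤ m → ω' i = ω₀ i) →
      |(∫ x, f x ∂μn ω') - avm| ≤ ε / 16 + 2 * Mf * ε' + 2 * Mf * ε' := by
    intro ω' hag
    set A : ℕ → Finset ℝ := fun k => (B (ω' k)).image fun x =>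
        x / ∏ i ∈ Finset.range (k + 1), (N (ω' i) : ℝ) ^ (n i) with hAdef
    have hAne : ∀ k, (A k).Nonempty := fun k => hAnne ω' k
    have hApos : ∀ k, ∀ a ∈ A k, 0 ≤ a := fun k => hAnpos ω' k
    have havm' : avgF A m (⇑f) = avm := by
      rw [havmdef]
      refine avgF_congr m ?_ (⇑f)
      intro k hk
      rw [hAdef]
      simp only
      rw [hag k hk]
      congr 1
      funext x
      congr 1
      refine Finset.prod_congr rfl fun i hi => ?_
      rw [hag i (le_trans (Nat.lt_succ_iff.mp (Finset.mem_range.mp hi)) hk)]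
    have hgC : avgF A m (fun x => gtest C 1 x) ≤ ε' := hheadn ω' m
    -- oscillation bound
    have hosc : ∀ t : ℝ, 0 ≤ t → |avgF A m (fun x => f (x + t) - f x)|
        ≤ ε / 16 + 2 * Mf * ε' + 2 * Mf * gtest (δ0 / 2) (δ0 / 2) t := by
      intro t ht
      have habs := avgF_abs (A := A) m (fun x => f (x + t) - f x)
      by_cases hts : t ≤ δ0
      · have hpt : ∀ x, 0 ≤ x → |f (x + t) - f x| ≤ ε / 16 + 2 * Mf * gtest C 1 x := by
          intro x hx
          by_cases hxC : x ≤ C + 1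
          · have h1 : x ∈ Set.Icc (0:ℝ) (C + 3) := ⟨hx, by linarith⟩
            have h2 : x + t ∈ Set.Icc (0:ℝ) (C + 3) := ⟨by linarith, by linarith⟩
            have hd : dist (x + t) x < δ := by
              rw [Real.dist_eq]
              rw [show x + t - x = t by ring, abs_of_nonneg ht]
              linarith
            have hosc1 := hδ _ h2 _ h1 hd
            rw [Real.dist_eq] at hosc1
            have hg0 : 0 ≤ gtest C 1 x := gtest_nonneg _ _ _
            nlinarith
          · have hone : gtest C 1 x = 1 := gtest_eq_one one_pos (by linarith)
            rw [hone]
            calc |f (x + t) - f x| ≤ |f (x + t)| + |f x| := abs_sub _ _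
              _ ≤ Mf + Mf := add_le_add (hfb _) (hfb _)
              _ ≤ ε / 16 + 2 * Mf * 1 := by linarith
        have hstep := avgF_mono hApos m _ _ hpt
        have heq : avgF A m (fun x => ε / 16 + 2 * Mf * gtest C 1 x)
            = ε / 16 + 2 * Mf * avgF A m (fun x => gtest C 1 x) := by
          rw [avgF_add m (fun _ => ε / 16) (fun x => 2 * Mf * gtest C 1 x),
            avgF_const hAne m (ε / 16), avgF_mul_const m (2 * Mf) (fun x => gtest C 1 x)]
        have hg'0 : 0 ≤ gtest (δ0 / 2) (δ0 / 2) t := gtest_nonneg _ _ _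
        calc |avgF A m (fun x => f (x + t) - f x)|
            ≤ avgF A m (fun x => |f (x + t) - f x|) := habs
          _ ≤ avgF A m (fun x => ε / 16 + 2 * Mf * gtest C 1 x) := hstep
          _ = ε / 16 + 2 * Mf * avgF A m (fun x => gtest C 1 x) := heq
          _ ≤ ε / 16 + 2 * Mf * ε' + 2 * Mf * gtest (δ0 / 2) (δ0 / 2) t := by nlinarith
      · push_neg at hts
        have hone : gtest (δ0 / 2) (δ0 / 2) t = 1 :=
          gtest_eq_one (by positivity) (by linarith)
        have hpt : ∀ x, 0 ≤ x → |f (x + t) - f x| ≤ 2 * Mf := by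
          intro x _
          calc |f (x + t) - f x| ≤ |f (x + t)| + |f x| := abs_sub _ _
            _ ≤ 2 * Mf := by linarith [hfb (x + t), hfb x]
        have hstep := (avgF_mono hApos m _ _ hpt).trans_eq (avgF_const hAne m (2 * Mf))
        rw [hone]
        calc |avgF A m (fun x => f (x + t) - f x)|
            ≤ avgF A m (fun x => |f (x + t) - f x|) := habs
          _ ≤ 2 * Mf := hstep
          _ ≤ ε / 16 + 2 * Mf * ε' + 2 * Mf * 1 := by nlinarith
    -- bound for all partial averages beyond m
    have hkey : ∀ k : ℕ, |avgF A (m + k + 1) (⇑f) - avgF A m (⇑f)|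
        ≤ ε / 16 + 2 * Mf * ε' + 2 * Mf * ε' := by
      intro k
      have hDne : ∀ j : ℕ, ((fun j => A (m + 1 + j)) j).Nonempty := fun j => hAne _
      have hDpos : ∀ j : ℕ, ∀ a ∈ (fun j => A (m + 1 + j)) j, 0 ≤ a := fun j => hApos _
      rw [avgF_split m k (⇑f)]
      have e1 : avgF A m (⇑f) = avgF (fun j => A (m + 1 + j)) k (fun _ => avgF A m (⇑f)) :=
        (avgF_const hDne k _).symm
      rw [e1, ← avgF_sub]
      have e2 : (fun t => avgF A m (fun x => f (x + t)) - avgF A m (⇑f))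
          = fun t => avgF A m (fun x => f (x + t) - f x) :=
        funext fun t => (avgF_sub m _ _).symm
      rw [e2]
      refine le_trans (avgF_abs k _) ?_
      refine le_trans (avgF_mono hDpos k _ _ hosc) ?_
      have heq : avgF (fun j => A (m + 1 + j)) k
          (fun t => ε / 16 + 2 * Mf * ε' + 2 * Mf * gtest (δ0 / 2) (δ0 / 2) t)
          = (ε / 16 + 2 * Mf * ε') + 2 * Mf * avgF (fun j => A (m + 1 + j)) k
              (fun t => gtest (δ0 / 2) (δ0 / 2) t) := by
        rw [avgF_add k (fun _ => ε / 16 + 2 * Mf * ε')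
          (fun t => 2 * Mf * gtest (δ0 / 2) (δ0 / 2) t),
          avgF_const hDne k (ε / 16 + 2 * Mf * ε'),
          avgF_mul_const k (2 * Mf) (fun t => gtest (δ0 / 2) (δ0 / 2) t)]
      rw [heq]
      have := htail ω' k
      nlinarith [this]
    -- pass to the limit
    have hW : Tendsto (fun M => avgF A M (⇑f)) atTop (𝓝 (∫ x, f x ∂μn ω')) := by
      have h := (hμn ω').2 f
      have hrw : (fun M => ∫ x, f x ∂(partialConv (fun k => (B (ω' k)).image fun x =>
          x / ∏ i ∈ Finset.range (k + 1), (N (ω' i) : ℝ) ^ (n i)) M))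
          = fun M => avgF A M (⇑f) := funext fun M => integral_partialConv hAne M f
      rwa [hrw] at h
    rw [← havm']
    have hcont : Tendsto (fun M => |avgF A M (⇑f) - avgF A m (⇑f)|) atTop
        (𝓝 |(∫ x, f x ∂μn ω') - avgF A m (⇑f)|) := (hW.sub tendsto_const_nhds).abs
    refine le_of_tendsto hcont ?_
    filter_upwards [eventually_ge_atTop (m + 1)] with M hM
    obtain ⟨k, rfl⟩ : ∃ k, M = m + k + 1 := ⟨M - m - 1, by omega⟩
    exact hkey k
  -- conclude continuity at ω₀
  have hV : {ω' : ℕ → ℕ | ∀ i, i ≤ m → ω' i = ω₀ i} ∈ 𝓝 ω₀ := by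
    have h := set_pi_mem_nhds (Set.finite_Iic m)
      (fun i (_ : i ∈ Set.Iic m) => IsOpen.mem_nhds (isOpen_discrete {ω₀ i}) rfl)
    refine Filter.mem_of_superset h ?_
    intro ω' hω' i hi
    exact hω' i hi
  filter_upwards [hV] with ω' hω'
  have h1 := hclaim ω' hω'
  have h2 := hclaim ω₀ (fun i _ => rfl)
  rw [Real.dist_eq]
  have htri : |(∫ x, f x ∂μn ω') - (∫ x, f x ∂μn ω₀)|
      ≤ |(∫ x, f x ∂μn ω') - avm| + |(∫ x, f x ∂μn ω₀) - avm| := by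
    rw [abs_sub_comm (∫ x, f x ∂μn ω₀) avm]
    exact abs_sub_le _ _ _
  have hMε : ε' * (32 * (Mf + 1)) = ε := div_mul_cancel₀ _ (by positivity)
  have hexp : ε = 32 * (Mf * ε') + 32 * ε' := by linear_combination -hMε
  have hb2 : 2 * Mf * ε' ≤ ε / 16 := by linarith [hε'pos]
  linarith
end

section
/- Let {(N_k, B_k)}_{k=1}^∞ satisfy: 0 ∈ B_k ⊆ ℕ, #B_k ≥ 2, #B_k ≤ N_k, N_k ≥ 2 for all k; the remainder bounded condition ∑_{k=1}^∞ (#B_{k,2})/(#B_k) < ∞ where B_{k,1} = B_k ∩ {0,1,…,N_k−1}, B_{k,2} = B_k \ B_{k,1}; and sup_{k≥1} (log max B_k)/(log N_k) < ∞. Then for every ω ∈ ℕ^ℕ the infinite convolution μ(ω) = δ_{N_{ω₁}^{-1}B_{ω₁}} * δ_{(N_{ω₁}N_{ω₂})^{-1}B_{ω₂}} * ⋯ exists, i.e. ∑_{k=1}^∞ (1/#B_{ω_k}) ∑_{b∈B_{ω_k}} b/(N_{ω₁}⋯N_{ω_k} + b) < ∞. -/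
/-!
Fix `ω` and write `P_k = N_{ω 0} ⋯ N_{ω k}` and `n = N_{ω k}`. The digits `b < n` of `B_{ω k}`
contribute at most `n / P_k ≤ 2⁻ᵏ` each. The hypothesis on `log max B` gives `b ≤ n ^ K` for all
`b ∈ B_{ω k}`, with `K = ⌈C⌉₊`. If `ω k` has occurred at least `2K` times among `ω 0, …, ω k`,
then `P_k ≥ n ^ (2K)`, so `n ^ K / P_k ≤ P_k ^ (-1/2) ≤ (√2⁻¹) ^ k`. Otherwise the digits `b ≥ n`
contribute at most the remainder ratio `#B_{ω k, 2} / #B_{ω k}`; since every index `j` is hit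
by fewer than `2K` such `k`, these ratios sum to at most `2K` times the series in the remainder
bounded condition.
-/

open Finset

lemma cast_le_pow_natCeil_of_log_le {N b : ℕ} {C : ℝ} (hN : 1 ≤ N)
    (h : Real.log b ≤ C * Real.log N) : (b : ℝ) ≤ (N : ℝ) ^ ⌈C⌉₊ := by
  rcases Nat.eq_zero_or_pos b with rfl | hb
  · simp
  have hN' : (1 : ℝ) ≤ N := by exact_mod_cast hN
  have hlog : Real.log b ≤ Real.log ((N : ℝ) ^ ⌈C⌉₊) := by
    rw [Real.log_pow]
    exact h.trans (mul_le_mul_of_nonneg_right (Nat.le_ceil C) (Real.log_nonneg hN'))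
  exact (Real.log_le_log_iff (by exact_mod_cast hb) (by positivity)).mp hlog

section Occurrences

variable {α : Type*} [DecidableEq α]

def occurrences (ω : ℕ → α) (k : ℕ) : ℕ := #{i ∈ range (k + 1) | ω i = ω k}

lemma occurrences_lt_of_lt {ω : ℕ → α} {k l : ℕ} (hkl : k < l) (h : ω k = ω l) :
    occurrences ω k < occurrences ω l := by
  refine card_lt_card ((ssubset_iff_of_subset ?_).2 ⟨l, by simp, by simp [hkl.not_ge]⟩)
  intro i hi
  simp only [mem_filter, mem_range] at hi ⊢
  exact ⟨by omega, hi.2.trans h⟩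

lemma injective_occurrences (ω : ℕ → α) : Function.Injective fun k => (ω k, occurrences ω k) := by
  intro k l hkl
  simp only [Prod.mk.injEq] at hkl
  rcases lt_trichotomy k l with h | h | h
  · exact absurd hkl.2 (occurrences_lt_of_lt h hkl.1).ne
  · exact h
  · exact absurd hkl.2 (occurrences_lt_of_lt h hkl.1.symm).ne'

lemma summable_ite_occurrences_lt {r : α → ℝ} (hr : Summable r) (hr0 : 0 ≤ r)
    (ω : ℕ → α) (M : ℕ) :
    Summable fun k => if occurrences ω k < M then r (ω k) else 0 := by
  have hM : Summable fun i : ℕ => if i < M then (1 : ℝ) else 0 :=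
    summable_of_ne_finset_zero (s := range M) fun i hi => by simp_all
  have := (hr.mul_of_nonneg hM hr0 fun i => by positivity).comp_injective
    (injective_occurrences ω)
  simpa only [Function.comp_def, mul_ite, mul_one, mul_zero] using this

lemma pow_occurrences_le_prod {f : α → ℕ} (hf : ∀ a, 0 < f a) (ω : ℕ → α) (k : ℕ) :
    f (ω k) ^ occurrences ω k ≤ ∏ i ∈ range (k + 1), f (ω i) := by
  calc f (ω k) ^ occurrences ω k = ∏ i ∈ range (k + 1) with ω i = ω k, f (ω i) := by
        rw [prod_congr rfl fun i hi => by rw [(mem_filter.1 hi).2], prod_const, occurrences]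
    _ ≤ ∏ i ∈ range (k + 1), f (ω i) :=
        prod_le_prod_of_subset_of_one_le' (filter_subset _ _) fun i _ _ => hf _

end Occurrences

lemma two_pow_mul_le_prod_range_succ {f : ℕ → ℕ} (hf : ∀ i, 2 ≤ f i) (k : ℕ) :
    2 ^ k * f k ≤ ∏ i ∈ range (k + 1), f i := by
  rw [prod_range_succ]
  gcongr
  simpa using pow_card_le_prod (range k) f 2 fun i _ => hf i

lemma inv_card_mul_sum_filter_le {ι : Type*} (A : Finset ι) (p : ι → Prop) [DecidablePred p]
    {f : ι → ℝ} {c : ℝ} (h : ∀ b ∈ A, p b → f b ≤ c) :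
    (#A : ℝ)⁻¹ * ∑ b ∈ A with p b, f b ≤ #{b ∈ A | p b} / #A * c := by
  have hsum := sum_le_card_nsmul _ f c fun b hb => h b (mem_filter.1 hb).1 (mem_filter.1 hb).2
  rw [nsmul_eq_mul] at hsum
  calc (#A : ℝ)⁻¹ * ∑ b ∈ A with p b, f b ≤ (#A : ℝ)⁻¹ * (#{b ∈ A | p b} * c) := by gcongr
    _ = #{b ∈ A | p b} / #A * c := by ring

lemma inv_card_mul_sum_filter_le_of_le {ι : Type*} (A : Finset ι) (p : ι → Prop)
    [DecidablePred p] {f : ι → ℝ} {c : ℝ} (hc : 0 ≤ c) (h : ∀ b ∈ A, p b → f b ≤ c) :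
    (#A : ℝ)⁻¹ * ∑ b ∈ A with p b, f b ≤ c := by
  refine (inv_card_mul_sum_filter_le A p h).trans (mul_le_of_le_one_left hc ?_)
  exact div_le_one_of_le₀ (by exact_mod_cast card_filter_le _ _) (by positivity)

lemma div_le_sqrt_inv_two_pow {x P : ℝ} (k : ℕ) (hx : 0 ≤ x) (hxP : x ^ 2 ≤ P)
    (hP : 2 ^ k ≤ P) : x / P ≤ √2⁻¹ ^ k := by
  have hP0 : 0 < P := lt_of_lt_of_le (by positivity) hP
  refine (pow_le_pow_iff_left₀ (by positivity) (by positivity) two_ne_zero).1 ?_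
  calc (x / P) ^ 2 = x ^ 2 / P / P := by ring
    _ ≤ P / P / P := by gcongr
    _ = P⁻¹ := by field_simp
    _ ≤ ((2 : ℝ) ^ k)⁻¹ := inv_anti₀ (by positivity) hP
    _ = (√2⁻¹ ^ k) ^ 2 := by
        rw [← pow_mul, mul_comm, pow_mul, Real.sq_sqrt (by norm_num), inv_pow]

/-- The key estimate for the `k`-th term of the series, where `A = B_{ω k}`, `n = N_{ω k}`,
`P = N_{ω 0} ⋯ N_{ω k}` and `m` is the number of occurrences of `ω k` among `ω 0, …, ω k`. -/
lemma inv_card_mul_sum_div_add_le {A : Finset ℕ} {n K m : ℕ} {P : ℝ} (k : ℕ) (hn : 1 ≤ n)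
    (hA : ∀ b ∈ A, (b : ℝ) ≤ n ^ K) (hnP : 2 ^ k * n ≤ P) (hmP : (n : ℝ) ^ m ≤ P) :
    (#A : ℝ)⁻¹ * ∑ b ∈ A, b / (P + b) ≤
      2⁻¹ ^ k + √2⁻¹ ^ k + if m < 2 * K then (#{b ∈ A | n ≤ b} / #A : ℝ) else 0 := by
  have hn' : (1 : ℝ) ≤ n := by exact_mod_cast hn
  have hkP : (2 : ℝ) ^ k ≤ P := le_trans (by nlinarith [pow_pos (two_pos (α := ℝ)) k]) hnP
  have hP : 0 < P := lt_of_lt_of_le (by positivity) hkP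
  have hsmall : (#A : ℝ)⁻¹ * ∑ b ∈ A with ¬n ≤ b, (b : ℝ) / (P + b) ≤ 2⁻¹ ^ k := by
    refine inv_card_mul_sum_filter_le_of_le A _ (by positivity) fun b _ hb => ?_
    have hb : (b : ℝ) ≤ n := by exact_mod_cast (not_le.1 hb).le
    calc (b : ℝ) / (P + b) ≤ n / (2 ^ k * n) := div_le_div₀ (by positivity) hb (by positivity)
          (by linarith [b.cast_nonneg (α := ℝ)])
      _ = 2⁻¹ ^ k := by rw [inv_pow]; field_simp
  have hlarge : (#A : ℝ)⁻¹ * ∑ b ∈ A with n ≤ b, (b : ℝ) / (P + b) ≤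
      √2⁻¹ ^ k + if m < 2 * K then (#{b ∈ A | n ≤ b} / #A : ℝ) else 0 := by
    split_ifs with hm
    · refine le_add_of_nonneg_of_le (by positivity) ?_
      simpa using inv_card_mul_sum_filter_le A (n ≤ ·) fun b _ _ =>
        div_le_one_of_le₀ (le_add_of_nonneg_left hP.le) (by positivity)
    · have hK : ((n : ℝ) ^ K) ^ 2 ≤ P := by
        rw [← pow_mul, mul_comm]
        exact (pow_le_pow_right₀ hn' (not_lt.1 hm)).trans hmP
      have hbP : ∀ b ∈ A, (b : ℝ) / (P + b) ≤ n ^ K / P := fun b hb =>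
        div_le_div₀ (by positivity) (hA b hb) hP (by linarith [b.cast_nonneg (α := ℝ)])
      rw [add_zero]
      exact (inv_card_mul_sum_filter_le_of_le A _ (by positivity) fun b hb _ => hbP b hb).trans
        (div_le_sqrt_inv_two_pow k (by positivity) hK hkP)
  rw [← sum_filter_add_sum_filter_not A (n ≤ ·), mul_add]
  linarith

theorem stmt13_general (N : ℕ → ℕ) (B : ℕ → Finset ℕ)
    (hN : ∀ k, 2 ≤ N k)
    (hRBC : Summable fun k => (((B k).filter fun b => N k ≤ b).card : ℝ) / ((B k).card : ℝ))
    (hsup : ∃ C : ℝ, ∀ k, ∀ b ∈ B k, Real.log (b : ℝ) ≤ C * Real.log (N k : ℝ)) :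
    ∀ ω : ℕ → ℕ, Summable fun k =>
      ((B (ω k)).card : ℝ)⁻¹ *
        ∑ b ∈ B (ω k),
          (b : ℝ) / ((∏ i ∈ Finset.range (k + 1), (N (ω i) : ℝ)) + (b : ℝ)) := by
  obtain ⟨C, hC⟩ := hsup
  intro ω
  have hN1 : ∀ j, 1 ≤ N j := fun j => (hN j).trans' one_le_two
  refine Summable.of_nonneg_of_le (fun k => by positivity) (fun k => ?_)
    (((summable_geometric_of_lt_one (r := 2⁻¹) (by norm_num) (by norm_num)).add
      (summable_geometric_of_lt_one (r := √2⁻¹) (by positivity)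
        ((Real.sqrt_lt' one_pos).2 (by norm_num)))).add
      (summable_ite_occurrences_lt hRBC (fun j => by positivity) ω (2 * ⌈C⌉₊)))
  refine inv_card_mul_sum_div_add_le k (hN1 _)
    (fun b hb => cast_le_pow_natCeil_of_log_le (hN1 _) (hC _ b hb)) ?_ ?_
  · exact_mod_cast two_pow_mul_le_prod_range_succ (fun i => hN (ω i)) k
  · exact_mod_cast pow_occurrences_le_prod hN1 ω k

theorem stmt13 (N : ℕ → ℕ) (B : ℕ → Finset ℕ)
    (hN : ∀ k, 2 ≤ N k) (h0 : ∀ k, 0 ∈ B k) (hcard : ∀ k, 2 ≤ (B k).card)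
    (hle : ∀ k, (B k).card ≤ N k)
    (hRBC : Summable fun k => (((B k).filter fun b => N k ≤ b).card : ℝ) / ((B k).card : ℝ))
    (hsup : ∃ C : ℝ, ∀ k, ∀ b ∈ B k, Real.log (b : ℝ) ≤ C * Real.log (N k : ℝ)) :
    ∀ ω : ℕ → ℕ, Summable fun k =>
      ((B (ω k)).card : ℝ)⁻¹ *
        ∑ b ∈ B (ω k),
          (b : ℝ) / ((∏ i ∈ Finset.range (k + 1), (N (ω i) : ℝ)) + (b : ℝ)) :=
  stmt13_general N B hN hRBC hsup
end

section
/- For every s ∈ (0,1], there exist an integer M ≥ 2, integers N_k ≥ 2 and digit sets B_k ⊆ {0,…,N_k−1} with #B_k ≥ 2 (k = 1,…,M), and a probability vector (p₁,…,p_M) with all p_k > 0, such that (∑_{k=1}^M p_k log #B_k)/(∑_{k=1}^M p_k log N_k) = s. -/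
/-!
Two digit systems suffice: `N₁ = 2 ^ n` and `N₂ = 2`, both with digit set `{0, 1}`, have
dimension ratios `1 / n` and `1`. Giving them weights `p` and `1 - p` yields the ratio
`1 / (1 + p (n - 1))`, which equals `s` once `p (n - 1) = 1 / s - 1`; for `s < 1` this is solved by
any `n > 1 / s`, and for `s = 1` by `n = 1`.
-/

open Finset Real

lemma exists_nat_weight_mul_sub_one_eq {s : ℝ} (hs : s ∈ Set.Ioc (0 : ℝ) 1) :
    ∃ n : ℕ, 1 ≤ n ∧ ∃ p ∈ Set.Ioo (0 : ℝ) 1, p * (n - 1) = s⁻¹ - 1 := by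
  obtain ⟨hs0, hs1⟩ := hs
  rcases hs1.eq_or_lt with rfl | hs1
  · exact ⟨1, le_rfl, 1 / 2, ⟨by norm_num, by norm_num⟩, by norm_num⟩
  obtain ⟨n, hn⟩ := exists_nat_gt s⁻¹
  have hs_inv : 1 < s⁻¹ := one_lt_inv₀ hs0 |>.2 hs1
  have hn1 : (0 : ℝ) < n - 1 := by linarith
  refine ⟨n, by exact_mod_cast (by linarith : (1 : ℝ) ≤ n), (s⁻¹ - 1) / (n - 1),
    ⟨div_pos (by linarith) hn1, (div_lt_one hn1).2 (by linarith)⟩, div_mul_cancel₀ _ hn1.ne'⟩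

lemma weighted_ratio_eq_of_mul_sub_one_eq {L s p n : ℝ} (hL : L ≠ 0) (hs : s ≠ 0)
    (hp : p * (n - 1) = s⁻¹ - 1) :
    (p * L + (1 - p) * L) / (p * (n * L) + (1 - p) * L) = s := by
  have hden : p * (n * L) + (1 - p) * L = s⁻¹ * L := by linear_combination L * hp
  rw [hden]
  field_simp
  ring

theorem stmt17 (s : ℝ) (hs : s ∈ Set.Ioc (0 : ℝ) 1) :
    ∃ (M : ℕ) (N : Fin M → ℕ) (B : Fin M → Finset ℕ) (p : Fin M → ℝ),
      2 ≤ M ∧ (∀ k, 2 ≤ N k) ∧ (∀ k, B k ⊆ Finset.range (N k)) ∧ (∀ k, 2 ≤ (B k).card) ∧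
      (∀ k, 0 < p k) ∧ (∑ k, p k = 1) ∧
      (∑ k, p k * Real.log ((B k).card)) / (∑ k, p k * Real.log (N k)) = s := by
  obtain ⟨n, hn, p, ⟨hp0, hp1⟩, hpn⟩ := exists_nat_weight_mul_sub_one_eq hs
  have h2n : 2 ≤ 2 ^ n := Nat.le_self_pow (by omega) 2
  refine ⟨2, ![2 ^ n, 2], fun _ => range 2, ![p, 1 - p], le_rfl,
    Fin.forall_fin_two.2 ⟨h2n, le_rfl⟩,
    Fin.forall_fin_two.2 ⟨range_subset_range.2 h2n, subset_rfl⟩, by simp,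
    Fin.forall_fin_two.2 ⟨hp0, sub_pos.2 hp1⟩, by simp [Fin.sum_univ_two], ?_⟩
  simp only [Fin.sum_univ_two, Matrix.cons_val_zero, Matrix.cons_val_one, card_range,
    Nat.cast_pow, Nat.cast_ofNat, Real.log_pow]
  exact weighted_ratio_eq_of_mul_sub_one_eq (Real.log_pos one_lt_two).ne' hs.1.ne' hpn
end
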